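/- Let (A,↘,↗,↖,↙) be a finite-dimensional quadri-algebra with associated horizontal dendriform algebra (A,≻,≺), and let r ∈ A⊗A be skew-symmetric. Then r, viewed as a linear map A* → A, satisfies r(a*)≻r(b*) = r((R_↗*+R_↖*)(r(a*))b* − L_↙*(r(b*))a*) and r(a*)≺r(b*) = r(−R_↗*(r(a*))b* + (L_↘*+L_↙*)(r(b*))a*) for all a*,b* ∈ A* if and only if r satisfies the two equations r₁₃≻r₂₃ = r₂₃↗r₁₂ + r₂₃↖r₁₂ + r₁₂↙r₁₃ and r₁₃≺r₂₃ = −r₂₃↗r₁₂ − r₁₂↘r₁₃ − r₁₂↙r₁₃. -/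

import Mathlib

open TensorProduct LinearMap Module

/-- Quadri-algebra axioms for the four products ↘ (`dse`), ↗ (`dne`), ↖ (`dnw`), ↙ (`dsw`). -/
def IsQuadri {K A : Type*} [Field K] [AddCommGroup A] [Module K A]
    (dse dne dnw dsw : A →ₗ[K] A →ₗ[K] A) : Prop :=
  (∀ x y z : A, dnw (dnw x y) z = dnw x (dse y z + dne y z + dnw y z + dsw y z)) ∧
  (∀ x y z : A, dnw (dne x y) z = dne x (dnw y z + dsw y z)) ∧
  (∀ x y z : A, dne (dne x y + dnw x y) z = dne x (dne y z + dse y z)) ∧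
  (∀ x y z : A, dnw (dsw x y) z = dsw x (dne y z + dnw y z)) ∧
  (∀ x y z : A, dnw (dse x y) z = dse x (dnw y z)) ∧
  (∀ x y z : A, dne (dse x y + dsw x y) z = dse x (dne y z)) ∧
  (∀ x y z : A, dsw (dnw x y + dsw x y) z = dsw x (dse y z + dsw y z)) ∧
  (∀ x y z : A, dsw (dne x y + dse x y) z = dse x (dsw y z)) ∧
  (∀ x y z : A, dse (dse x y + dne x y + dnw x y + dsw x y) z = dse x (dse y z))

/-- `r₁₂ ∘ r₁₃` for `r ∈ A ⊗ A`: `Σ (aᵢ ∘ aⱼ) ⊗ bᵢ ⊗ bⱼ`. -/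
noncomputable def tprod12_13 {K A : Type*} [Field K] [AddCommGroup A] [Module K A]
    (m : A →ₗ[K] A →ₗ[K] A) (r : A ⊗[K] A) : A ⊗[K] (A ⊗[K] A) :=
  (TensorProduct.map (TensorProduct.lift m) LinearMap.id)
    ((TensorProduct.tensorTensorTensorComm K A A A A) (r ⊗ₜ[K] r))

/-- `r₁₃ ∘ r₂₃` for `r ∈ A ⊗ A`: `Σ aᵢ ⊗ aⱼ ⊗ (bᵢ ∘ bⱼ)`. -/
noncomputable def tprod13_23 {K A : Type*} [Field K] [AddCommGroup A] [Module K A]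
    (m : A →ₗ[K] A →ₗ[K] A) (r : A ⊗[K] A) : A ⊗[K] (A ⊗[K] A) :=
  (TensorProduct.assoc K A A A)
    ((TensorProduct.map LinearMap.id (TensorProduct.lift m))
      ((TensorProduct.tensorTensorTensorComm K A A A A) (r ⊗ₜ[K] r)))

/-- `r₂₃ ∘ r₁₂` for `r ∈ A ⊗ A`: `Σ aᵢ ⊗ (aⱼ ∘ bᵢ) ⊗ bⱼ`. -/
noncomputable def tprod23_12 {K A : Type*} [Field K] [AddCommGroup A] [Module K A]
    (m : A →ₗ[K] A →ₗ[K] A) (r : A ⊗[K] A) : A ⊗[K] (A ⊗[K] A) :=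
  (TensorProduct.map LinearMap.id (TensorProduct.comm K A A).toLinearMap)
    ((TensorProduct.assoc K A A A)
      ((TensorProduct.map LinearMap.id (TensorProduct.lift m))
        ((TensorProduct.tensorTensorTensorComm K A A A A)
          ((TensorProduct.map (TensorProduct.comm K A A).toLinearMap LinearMap.id)
            ((TensorProduct.tensorTensorTensorComm K A A A A) (r ⊗ₜ[K] r))))))

/-- The linear map `A* → A` induced by `r ∈ A ⊗ A`, `v* ↦ Σ ⟨v*, bᵢ⟩ aᵢ`. -/
noncomputable def rmap (K A : Type*) [Field K] [AddCommGroup A] [Module K A] :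
    A ⊗[K] A →ₗ[K] Module.Dual K A →ₗ[K] A :=
  (dualTensorHom K (Module.Dual K A) A) ∘ₗ
    (TensorProduct.map (Module.Dual.eval K A) LinearMap.id) ∘ₗ
    (TensorProduct.comm K A A).toLinearMap

/-- Dualization `ρ ↦ ρ*` of an action `ρ : A →ₗ End A`, via transpose:
`⟨ρ*(x) a*, y⟩ = ⟨a*, ρ(x) y⟩`. -/
noncomputable def dualize {K A : Type*} [Field K] [AddCommGroup A] [Module K A]
    (ρ : A →ₗ[K] A →ₗ[K] A) :
    A →ₗ[K] Module.Dual K A →ₗ[K] Module.Dual K A :=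
  (Module.Dual.transpose (R := K)) ∘ₗ ρ


/-!
Over a field every vector space is free, so a tensor `t ∈ A ⊗ (A ⊗ A)` vanishes as soon as all
its contractions `(a* ⊗ b* ⊗ id) t` do. For skew-symmetric `r`, contracting `r₁₃ ∘ r₂₃`,
`r₂₃ ∘ r₁₂` and `r₁₂ ∘ r₁₃` against `a*, b*` gives `r(a*) ∘ r(b*)`, `r(R_∘*(r(a*)) b*)` and
`-r(L_∘*(r(b*)) a*)`, so the two tensor equations are the two operator identities read off
against arbitrary `a*, b*`.
-/

namespace TensorProduct

variable {R M N P : Type*} [CommRing R] [AddCommGroup M] [Module R M] [AddCommGroup N]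
  [Module R N] [AddCommGroup P] [Module R P]

theorem eq_zero_of_forall_dual_rTensor [Module.Free R M] {t : M ⊗[R] N}
    (h : ∀ a : Dual R M, TensorProduct.lid R N (a.rTensor N t) = 0) : t = 0 := by
  let b := Module.Free.chooseBasis R M
  apply (equivFinsuppOfBasisLeft b).injective
  ext i
  simp [equivFinsuppOfBasisLeft_apply, h]

def contract₁₂ (a : Dual R M) (b : Dual R N) : M ⊗[R] (N ⊗[R] P) →ₗ[R] P :=
  (TensorProduct.lid R P).toLinearMap ∘ₗ b.rTensor P ∘ₗ
    (TensorProduct.lid R (N ⊗[R] P)).toLinearMap ∘ₗ a.rTensor (N ⊗[R] P)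

@[simp]
theorem contract₁₂_tmul (a : Dual R M) (b : Dual R N) (x : M) (y : N) (z : P) :
    contract₁₂ a b (x ⊗ₜ (y ⊗ₜ z)) = a x • b y • z := by
  simp [contract₁₂]

theorem eq_zero_of_forall_contract₁₂ [Module.Free R M] [Module.Free R N]
    {t : M ⊗[R] (N ⊗[R] P)} (h : ∀ a b, contract₁₂ a b t = 0) : t = 0 :=
  eq_zero_of_forall_dual_rTensor fun a ↦ eq_zero_of_forall_dual_rTensor fun b ↦ h a b

theorem eq_iff_forall_contract₁₂ [Module.Free R M] [Module.Free R N]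
    {t t' : M ⊗[R] (N ⊗[R] P)} : t = t' ↔ ∀ a b, contract₁₂ a b t = contract₁₂ a b t' := by
  refine ⟨fun h _ _ ↦ h ▸ rfl, fun h ↦ sub_eq_zero.mp (eq_zero_of_forall_contract₁₂ ?_)⟩
  simp [h]

end TensorProduct

section Contraction

variable {K A : Type*} [Field K] [AddCommGroup A] [Module K A] (m : A →ₗ[K] A →ₗ[K] A)

/- `r` occurs twice in `tprod12_13 m r` etc., so the contraction formulas are proved for these
bilinear versions, where induction on pure tensors works in each argument separately. -/
noncomputable def tprod12_13₂ : A ⊗[K] A →ₗ[K] A ⊗[K] A →ₗ[K] A ⊗[K] (A ⊗[K] A) :=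
  (TensorProduct.mk K _ _).compr₂
    (map (lift m) LinearMap.id ∘ₗ (tensorTensorTensorComm K A A A A).toLinearMap)

noncomputable def tprod13_23₂ : A ⊗[K] A →ₗ[K] A ⊗[K] A →ₗ[K] A ⊗[K] (A ⊗[K] A) :=
  (TensorProduct.mk K _ _).compr₂ ((TensorProduct.assoc K A A A).toLinearMap ∘ₗ
    map LinearMap.id (lift m) ∘ₗ (tensorTensorTensorComm K A A A A).toLinearMap)

noncomputable def tprod23_12₂ : A ⊗[K] A →ₗ[K] A ⊗[K] A →ₗ[K] A ⊗[K] (A ⊗[K] A) :=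
  (TensorProduct.mk K _ _).compr₂ (map LinearMap.id (TensorProduct.comm K A A).toLinearMap ∘ₗ
    (TensorProduct.assoc K A A A).toLinearMap ∘ₗ map LinearMap.id (lift m) ∘ₗ
    (tensorTensorTensorComm K A A A A).toLinearMap ∘ₗ
    map (TensorProduct.comm K A A).toLinearMap LinearMap.id ∘ₗ
    (tensorTensorTensorComm K A A A A).toLinearMap)

theorem tprod12_13_eq (r : A ⊗[K] A) : tprod12_13 m r = tprod12_13₂ m r r := rfl
theorem tprod13_23_eq (r : A ⊗[K] A) : tprod13_23 m r = tprod13_23₂ m r r := rfl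
theorem tprod23_12_eq (r : A ⊗[K] A) : tprod23_12 m r = tprod23_12₂ m r r := rfl

@[simp]
theorem rmap_tmul (x y : A) (a : Module.Dual K A) : rmap K A (x ⊗ₜ y) a = a y • x := by
  simp [rmap]

@[simp]
theorem dualize_apply_apply (ρ : A →ₗ[K] A →ₗ[K] A) (x : A) (a : Module.Dual K A) (y : A) :
    dualize ρ x a y = a (ρ x y) := rfl

theorem dualize_add (ρ ρ' : A →ₗ[K] A →ₗ[K] A) : dualize (ρ + ρ') = dualize ρ + dualize ρ' :=
  LinearMap.comp_add _ _ _

theorem contract₁₂_tprod13_23₂ (a b : Module.Dual K A) (r s : A ⊗[K] A) :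
    contract₁₂ a b (tprod13_23₂ m r s) =
      m (rmap K A (TensorProduct.comm K A A r) a) (rmap K A (TensorProduct.comm K A A s) b) := by
  induction r using TensorProduct.induction_on with
  | zero => simp
  | add r₁ r₂ h₁ h₂ => simp only [map_add, LinearMap.add_apply, h₁, h₂]
  | tmul x y =>
    induction s using TensorProduct.induction_on with
    | zero => simp
    | add s₁ s₂ h₁ h₂ => simp only [map_add, LinearMap.add_apply, h₁, h₂]
    | tmul u v => simp [tprod13_23₂, smul_comm (b u) (a x)]

theorem contract₁₂_tprod12_13₂ (a b : Module.Dual K A) (r s : A ⊗[K] A) :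
    contract₁₂ a b (tprod12_13₂ m r s) =
      rmap K A (TensorProduct.comm K A A s) (dualize m (rmap K A r b) a) := by
  induction r using TensorProduct.induction_on with
  | zero => simp
  | add r₁ r₂ h₁ h₂ => simp only [map_add, LinearMap.add_apply, h₁, h₂]
  | tmul x y =>
    induction s using TensorProduct.induction_on with
    | zero => simp
    | add s₁ s₂ h₁ h₂ => simp only [map_add, LinearMap.add_apply, h₁, h₂]
    | tmul u v => simp [tprod12_13₂, smul_comm (b y) (a (m x u))]

theorem contract₁₂_tprod23_12₂ (a b : Module.Dual K A) (r s : A ⊗[K] A) :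
    contract₁₂ a b (tprod23_12₂ m r s) =
      rmap K A (TensorProduct.comm K A A r)
        (dualize m.flip (rmap K A (TensorProduct.comm K A A s) a) b) := by
  induction r using TensorProduct.induction_on with
  | zero => simp
  | add r₁ r₂ h₁ h₂ => simp only [map_add, LinearMap.add_apply, h₁, h₂]
  | tmul x y =>
    induction s using TensorProduct.induction_on with
    | zero => simp
    | add s₁ s₂ h₁ h₂ => simp only [map_add, LinearMap.add_apply, h₁, h₂]
    | tmul u v => simp [tprod23_12₂]

end Contraction

section Skew

variable {K A : Type*} [Field K] [AddCommGroup A] [Module K A] (m : A →ₗ[K] A →ₗ[K] A)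
  {r : A ⊗[K] A} (hr : TensorProduct.comm K A A r = -r) (a b : Module.Dual K A)
include hr

theorem contract₁₂_tprod13_23 :
    contract₁₂ a b (tprod13_23 m r) = m (rmap K A r a) (rmap K A r b) := by
  simp [tprod13_23_eq, contract₁₂_tprod13_23₂, hr]

theorem contract₁₂_tprod12_13 :
    contract₁₂ a b (tprod12_13 m r) = -rmap K A r (dualize m (rmap K A r b) a) := by
  simp [tprod12_13_eq, contract₁₂_tprod12_13₂, hr]

theorem contract₁₂_tprod23_12 :
    contract₁₂ a b (tprod23_12 m r) = rmap K A r (dualize m.flip (rmap K A r a) b) := by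
  simp [tprod23_12_eq, contract₁₂_tprod23_12₂, hr]

end Skew

theorem quadri_Ooperator_iff_tensor_equations_general
    {K A : Type*} [Field K] [AddCommGroup A] [Module K A]
    (dse dne dnw dsw : A →ₗ[K] A →ₗ[K] A)
    (r : A ⊗[K] A)
    (hskew : (TensorProduct.comm K A A) r = - r) :
    ((∀ a b : Module.Dual K A,
        (dne + dse) (rmap K A r a) (rmap K A r b) =
          rmap K A r (dualize (dne.flip + dnw.flip) (rmap K A r a) b
            - dualize dsw (rmap K A r b) a)) ∧
     (∀ a b : Module.Dual K A,
        (dnw + dsw) (rmap K A r a) (rmap K A r b) =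
          rmap K A r (- dualize dne.flip (rmap K A r a) b
            + dualize (dse + dsw) (rmap K A r b) a))) ↔
    ((tprod13_23 (dne + dse) r
        = tprod23_12 dne r + tprod23_12 dnw r + tprod12_13 dsw r) ∧
     (tprod13_23 (dnw + dsw) r
        = - tprod23_12 dne r - tprod12_13 dse r - tprod12_13 dsw r)) := by
  simp only [eq_iff_forall_contract₁₂, map_add, map_neg, dualize_add,
    LinearMap.add_apply, contract₁₂_tprod13_23 _ hskew, contract₁₂_tprod12_13 _ hskew,
    contract₁₂_tprod23_12 _ hskew, sub_eq_add_neg, neg_neg, add_assoc]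

/-- Proposition 3.4.13: for a skew-symmetric `r ∈ A ⊗ A` over a finite-dimensional
quadri-algebra `(A, ↘, ↗, ↖, ↙)` with associated horizontal dendriform algebra
`(A, ≻, ≺)` (`≻ = ↗ + ↘`, `≺ = ↖ + ↙`), `r` is an `O`-operator of `(A, ≻, ≺)`
associated to `(R_↗* + R_↖*, −L_↙*, −R_↗*, L_↘* + L_↙*, A*)` if and only if `r`
satisfies equations (3.4.17) and (3.4.18). -/
theorem quadri_Ooperator_iff_tensor_equations
    {K A : Type*} [Field K] [CharZero K] [AddCommGroup A] [Module K A]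
    [FiniteDimensional K A]
    (dse dne dnw dsw : A →ₗ[K] A →ₗ[K] A)
    (hq : IsQuadri dse dne dnw dsw)
    (r : A ⊗[K] A)
    (hskew : (TensorProduct.comm K A A) r = - r) :
    ((∀ a b : Module.Dual K A,
        (dne + dse) (rmap K A r a) (rmap K A r b) =
          rmap K A r (dualize (dne.flip + dnw.flip) (rmap K A r a) b
            - dualize dsw (rmap K A r b) a)) ∧
     (∀ a b : Module.Dual K A,
        (dnw + dsw) (rmap K A r a) (rmap K A r b) =
          rmap K A r (- dualize dne.flip (rmap K A r a) b
            + dualize (dse + dsw) (rmap K A r b) a))) ↔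
    ((tprod13_23 (dne + dse) r
        = tprod23_12 dne r + tprod23_12 dnw r + tprod12_13 dsw r) ∧
     (tprod13_23 (dnw + dsw) r
        = - tprod23_12 dne r - tprod12_13 dse r - tprod12_13 dsw r)) :=
  quadri_Ooperator_iff_tensor_equations_general dse dne dnw dsw r hskew
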